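/- For every γ > 0, the function F(λ) := λ² · ∫ 1/(s + λ)² dMP(γ)(s) is strictly increasing and continuous on (0, ∞), with F(λ) → max(0, 1 − 1/γ) as λ → 0⁺ and F(λ) → 1 as λ → ∞. Consequently, for every τ ∈ (max(0, 1 − 1/γ), 1) there exists a unique λ > 0 with F(λ) = τ. -/

import Mathlib

/-!
Write `F(λ) = ∫ (λ / (s + λ))² dμ(s)` for a finite measure `μ` carried by `[0, ∞)`. The
integrand lies in `[0, 1]`, is nondecreasing in `λ` (strictly when `s > 0`) and tends to the
indicator of `{0}` as `λ → 0⁺` and to `1` as `λ → ∞`. Dominated convergence gives continuity and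
the limits `μ {0}` and `μ ℝ`, strict monotonicity needs only `μ (0, ∞) > 0`, and the intermediate
value theorem gives the root. For `MP(γ)` the one real computation is the mass of the absolutely
continuous part, `∫ₐᵇ √((b - s)(s - a)) / s ds = π/2 (√b - √a)²`, from an explicit antiderivative.
-/

open MeasureTheory Filter

/-- The Marchenko–Pastur measure with aspect ratio `γ`: a point mass of weight
`max 0 (1 - 1/γ)` at `0` plus the absolutely continuous part with density
`s ↦ √((b - s)(s - a)) / (2πγs)` on `[a, b]`, where `a = (1 - √γ)²`, `b = (1 + √γ)²`. -/
noncomputable def MP (γ : ℝ) : Measure ℝ :=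
  ENNReal.ofReal (max 0 (1 - 1 / γ)) • Measure.dirac 0 +
    volume.withDensity
      (Set.indicator (Set.Icc ((1 - Real.sqrt γ) ^ 2) ((1 + Real.sqrt γ) ^ 2))
        (fun s => ENNReal.ofReal
          (Real.sqrt (((1 + Real.sqrt γ) ^ 2 - s) * (s - (1 - Real.sqrt γ) ^ 2)) /
            (2 * Real.pi * γ * s))))

open Set Topology Real

section Weight

variable {s l₁ l₂ : ℝ}

lemma div_add_self_sq_le_one (hs : 0 ≤ s) (hl₁ : 0 < l₁) : (l₁ / (s + l₁)) ^ 2 ≤ 1 :=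
  pow_le_one₀ (by positivity) ((div_le_one (by linarith)).2 (by linarith))

lemma div_add_self_sq_le_of_le (hs : 0 ≤ s) (hl₁ : 0 < l₁) (h : l₁ ≤ l₂) :
    (l₁ / (s + l₁)) ^ 2 ≤ (l₂ / (s + l₂)) ^ 2 := by
  refine pow_le_pow_left₀ (by positivity) ?_ 2
  rw [div_le_div_iff₀ (by linarith) (by linarith)]
  nlinarith

lemma div_add_self_sq_lt_of_lt (hs : 0 < s) (hl₁ : 0 < l₁) (h : l₁ < l₂) :
    (l₁ / (s + l₁)) ^ 2 < (l₂ / (s + l₂)) ^ 2 := by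
  refine pow_lt_pow_left₀ ?_ (by positivity) two_ne_zero
  rw [div_lt_div_iff₀ (by linarith) (by linarith)]
  nlinarith

lemma measurable_div_add_self_sq (l : ℝ) : Measurable fun s : ℝ => (l / (s + l)) ^ 2 := by
  fun_prop

end Weight

/-- `λ² m′(-λ)`, where `m(z) = ∫ 1 / (s - z) dμ(s)` is the Stieltjes transform of `μ`. -/
noncomputable def scaledStieltjesDeriv (μ : Measure ℝ) (lam : ℝ) : ℝ :=
  ∫ s, (lam / (s + lam)) ^ 2 ∂μ

lemma scaledStieltjesDeriv_eq (μ : Measure ℝ) (lam : ℝ) :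
    scaledStieltjesDeriv μ lam = lam ^ 2 * ∫ s, 1 / (s + lam) ^ 2 ∂μ := by
  rw [scaledStieltjesDeriv, ← integral_const_mul]
  simp only [div_pow, mul_one_div]

namespace scaledStieltjesDeriv

variable {μ : Measure ℝ} (hμ : ∀ᵐ s ∂μ, 0 ≤ s)
include hμ

lemma ae_norm_le_one {lam : ℝ} (hlam : 0 < lam) : ∀ᵐ s ∂μ, ‖(lam / (s + lam)) ^ 2‖ ≤ 1 := by
  filter_upwards [hμ] with s hs
  rw [Real.norm_of_nonneg (by positivity)]
  exact div_add_self_sq_le_one hs hlam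

variable [IsFiniteMeasure μ]

lemma integrable {lam : ℝ} (hlam : 0 < lam) : Integrable (fun s => (lam / (s + lam)) ^ 2) μ :=
  (integrable_const 1).mono' (measurable_div_add_self_sq lam).aestronglyMeasurable
    (ae_norm_le_one hμ hlam)

lemma strictMonoOn (hpos : μ (Ioi 0) ≠ 0) : StrictMonoOn (scaledStieltjesDeriv μ) (Ioi 0) := by
  intro l₁ (hl₁ : 0 < l₁) l₂ (hl₂ : 0 < l₂) h
  have hle : ∀ᵐ s ∂μ, 0 ≤ (l₂ / (s + l₂)) ^ 2 - (l₁ / (s + l₁)) ^ 2 := by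
    filter_upwards [hμ] with s hs
    exact sub_nonneg.2 (div_add_self_sq_le_of_le hs hl₁ h.le)
  have hint := (integrable hμ hl₂).sub (integrable hμ hl₁)
  have hgap : 0 < ∫ s, ((l₂ / (s + l₂)) ^ 2 - (l₁ / (s + l₁)) ^ 2) ∂μ := by
    refine (integral_pos_iff_support_of_nonneg_ae hle hint).2 (pos_iff_ne_zero.2 ?_)
    refine fun h0 => hpos (measure_mono_null (fun s (hs : 0 < s) => ?_) h0)
    exact sub_ne_zero.2 (div_add_self_sq_lt_of_lt hs hl₁ h).ne'
  rw [integral_sub (integrable hμ hl₂) (integrable hμ hl₁)] at hgap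
  exact sub_pos.1 hgap

lemma continuousOn : ContinuousOn (scaledStieltjesDeriv μ) (Ioi 0) := by
  refine continuousOn_of_dominated (bound := fun _ => 1)
    (fun lam _ => (measurable_div_add_self_sq lam).aestronglyMeasurable)
    (fun _ hlam => ae_norm_le_one hμ hlam) (integrable_const 1) ?_
  filter_upwards [hμ] with s hs
  refine ContinuousOn.pow (continuousOn_id.div (by fun_prop) fun lam (hlam : 0 < lam) => ?_) 2
  positivity

lemma tendsto_nhdsGT_zero :
    Tendsto (scaledStieltjesDeriv μ) (𝓝[>] 0) (𝓝 (μ.real {0})) := by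
  have hlim : ∀ᵐ s ∂μ, Tendsto (fun lam => (lam / (s + lam)) ^ 2) (𝓝[>] 0)
      (𝓝 (({0} : Set ℝ).indicator 1 s)) := by
    filter_upwards [hμ] with s hs
    rcases hs.eq_or_lt with rfl | hs
    · refine tendsto_const_nhds.congr' ?_
      filter_upwards [self_mem_nhdsWithin] with lam (hlam : 0 < lam)
      simp [hlam.ne']
    · rw [indicator_of_notMem (show s ∉ ({0} : Set ℝ) from hs.ne')]
      have hcont : ContinuousAt (fun lam => (lam / (s + lam)) ^ 2) 0 :=
        (continuousAt_id.div (by fun_prop) (by simpa using hs.ne')).pow 2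
      simpa using hcont.tendsto.mono_left nhdsWithin_le_nhds
  have := tendsto_integral_filter_of_dominated_convergence (fun _ => 1)
    (Eventually.of_forall fun lam => (measurable_div_add_self_sq lam).aestronglyMeasurable) ?_
    (integrable_const 1) hlim
  · rwa [integral_indicator_one (measurableSet_singleton 0)] at this
  · filter_upwards [self_mem_nhdsWithin] with lam hlam using ae_norm_le_one hμ hlam

lemma tendsto_atTop :
    Tendsto (scaledStieltjesDeriv μ) atTop (𝓝 (μ.real univ)) := by
  have hlim : ∀ᵐ s ∂μ, Tendsto (fun lam => (lam / (s + lam)) ^ 2) atTop (𝓝 1) := by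
    refine Eventually.of_forall fun s => ?_
    have h : Tendsto (fun lam => (1 - s / (s + lam)) ^ 2) atTop (𝓝 1) := by
      simpa using ((tendsto_const_nhds (x := (1 : ℝ))).sub ((tendsto_const_nhds (x := s)).div_atTop
        (tendsto_atTop_add_const_left _ s tendsto_id))).pow 2
    refine h.congr' ?_
    filter_upwards [eventually_gt_atTop (-s)] with lam hlam
    rw [one_sub_div (by linarith), add_sub_cancel_left]
  have := tendsto_integral_filter_of_dominated_convergence (fun _ => 1)
    (Eventually.of_forall fun lam => (measurable_div_add_self_sq lam).aestronglyMeasurable) ?_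
    (integrable_const 1) hlim
  · rwa [integral_const, smul_eq_mul, mul_one] at this
  · filter_upwards [eventually_gt_atTop 0] with lam hlam using ae_norm_le_one hμ hlam

end scaledStieltjesDeriv

lemma StrictMonoOn.existsUnique_eq_of_tendsto {f : ℝ → ℝ} {c a b τ : ℝ}
    (hmono : StrictMonoOn f (Ioi c)) (hcont : ContinuousOn f (Ioi c))
    (hc : Tendsto f (𝓝[>] c) (𝓝 a)) (htop : Tendsto f atTop (𝓝 b)) (ha : a < τ) (hb : τ < b) :
    ∃! x, c < x ∧ f x = τ := by
  obtain ⟨x₁, hx₁τ, hx₁⟩ := ((hc.eventually_lt_const ha).and self_mem_nhdsWithin).exists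
  obtain ⟨x₂, hx₂τ, hx₁₂⟩ := ((htop.eventually_const_lt hb).and (eventually_gt_atTop x₁)).exists
  have hsub : Icc x₁ x₂ ⊆ Ioi c := fun x hx => lt_of_lt_of_le hx₁ hx.1
  obtain ⟨x, hx, hfx⟩ := intermediate_value_Icc hx₁₂.le (hcont.mono hsub) ⟨hx₁τ.le, hx₂τ.le⟩
  exact ⟨x, ⟨hsub hx, hfx⟩, fun y ⟨hy, hfy⟩ => hmono.injOn hy (hsub hx) (hfy.trans hfx.symm)⟩

section SqrtMulDiv

variable {a b s : ℝ}

/-- An antiderivative of `s ↦ √((b - s)(s - a)) / s` on `[a, b]`. -/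
noncomputable def sqrtMulDivAntideriv (a b s : ℝ) : ℝ :=
  √((b - s) * (s - a)) + (a + b) / 2 * arcsin ((2 * s - a - b) / (b - a))
    - √a * √b * arcsin (((a + b) * s - 2 * a * b) / ((b - a) * s))

namespace sqrtMulDivAntideriv

lemma hasDerivAt_sqrt (hs : s ∈ Ioo a b) :
    HasDerivAt (fun s => √((b - s) * (s - a)))
      ((a + b - 2 * s) / (2 * √((b - s) * (s - a)))) s := by
  have hQ : HasDerivAt (fun s => (b - s) * (s - a)) (a + b - 2 * s) s := by
    refine (((hasDerivAt_id s).const_sub b).mul ((hasDerivAt_id s).sub_const a)).congr_deriv ?_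
    simp only [id_eq]; ring
  have hQpos : (b - s) * (s - a) ≠ 0 := (mul_pos (sub_pos.2 hs.2) (sub_pos.2 hs.1)).ne'
  refine ((Real.hasDerivAt_sqrt hQpos).comp s hQ).congr_deriv ?_
  ring

lemma hasDerivAt_arcsin_affine (hs : s ∈ Ioo a b) :
    HasDerivAt (fun s => arcsin ((2 * s - a - b) / (b - a))) (1 / √((b - s) * (s - a))) s := by
  have hab : 0 < b - a := by linarith [hs.1, hs.2]
  have hu : HasDerivAt (fun s => (2 * s - a - b) / (b - a)) (2 / (b - a)) s := by
    simpa using (((hasDerivAt_id s).const_mul 2).sub_const a |>.sub_const b).div_const (b - a)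
  have hlo : -1 < (2 * s - a - b) / (b - a) := by rw [lt_div_iff₀ hab]; linarith [hs.1]
  have hhi : (2 * s - a - b) / (b - a) < 1 := by rw [div_lt_one hab]; linarith [hs.2]
  have h1u : 1 - ((2 * s - a - b) / (b - a)) ^ 2 = 2 ^ 2 * ((b - s) * (s - a)) / (b - a) ^ 2 := by
    field_simp
    ring
  have hsqrt : √(1 - ((2 * s - a - b) / (b - a)) ^ 2) = 2 * √((b - s) * (s - a)) / (b - a) := by
    rw [h1u, Real.sqrt_div' _ (by positivity), Real.sqrt_mul (by positivity),
      Real.sqrt_sq (by positivity), Real.sqrt_sq hab.le]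
  refine ((Real.hasDerivAt_arcsin hlo.ne' hhi.ne).comp s hu).congr_deriv ?_
  have := Real.sqrt_pos.2 (mul_pos (sub_pos.2 hs.2) (sub_pos.2 hs.1))
  rw [hsqrt]
  field_simp

lemma hasDerivAt_arcsin_moebius (ha : 0 < a) (hs : s ∈ Ioo a b) :
    HasDerivAt (fun s => arcsin (((a + b) * s - 2 * a * b) / ((b - a) * s)))
      (√a * √b / (s * √((b - s) * (s - a)))) s := by
  have hab : 0 < b - a := by linarith [hs.1, hs.2]
  have hs0 : 0 < s := ha.trans hs.1
  have hb : 0 < b := hs0.trans hs.2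
  have hQ : 0 < (b - s) * (s - a) := mul_pos (sub_pos.2 hs.2) (sub_pos.2 hs.1)
  have hv : HasDerivAt (fun s => ((a + b) * s - 2 * a * b) / ((b - a) * s))
      (2 * a * b / ((b - a) * s ^ 2)) s := by
    refine ((((hasDerivAt_id s).const_mul (a + b)).sub_const (2 * a * b)).div
      ((hasDerivAt_id s).const_mul (b - a)) (by positivity)).congr_deriv ?_
    simp only [id_eq]
    field_simp
    ring
  have h1v : 1 - (((a + b) * s - 2 * a * b) / ((b - a) * s)) ^ 2
      = (2 * √a * √b) ^ 2 * ((b - s) * (s - a)) / ((b - a) * s) ^ 2 := by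
    rw [mul_pow, mul_pow, Real.sq_sqrt ha.le, Real.sq_sqrt hb.le]
    field_simp
    ring
  have hpos : 0 < 1 - (((a + b) * s - 2 * a * b) / ((b - a) * s)) ^ 2 := by
    rw [h1v]; positivity
  have hlo : -1 < ((a + b) * s - 2 * a * b) / ((b - a) * s) := by nlinarith
  have hhi : ((a + b) * s - 2 * a * b) / ((b - a) * s) < 1 := by nlinarith
  have hsqrt : √(1 - (((a + b) * s - 2 * a * b) / ((b - a) * s)) ^ 2)
      = 2 * √a * √b * √((b - s) * (s - a)) / ((b - a) * s) := by
    rw [h1v, Real.sqrt_div' _ (by positivity), Real.sqrt_mul (by positivity),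
      Real.sqrt_sq (by positivity), Real.sqrt_sq (by positivity)]
  refine ((Real.hasDerivAt_arcsin hlo.ne' hhi.ne).comp s hv).congr_deriv ?_
  have := Real.sqrt_pos.2 hQ
  have := Real.sqrt_pos.2 ha
  have := Real.sqrt_pos.2 hb
  rw [hsqrt]
  field_simp
  rw [Real.sq_sqrt ha.le, Real.sq_sqrt hb.le, mul_comm]

lemma hasDerivAt_moebius_term (ha : 0 ≤ a) (hs : s ∈ Ioo a b) :
    HasDerivAt (fun s => √a * √b * arcsin (((a + b) * s - 2 * a * b) / ((b - a) * s)))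
      (a * b / (s * √((b - s) * (s - a)))) s := by
  rcases ha.eq_or_lt with rfl | ha
  · simpa using hasDerivAt_const s (0 : ℝ)
  · refine ((hasDerivAt_arcsin_moebius ha hs).const_mul (√a * √b)).congr_deriv ?_
    rw [← mul_div_assoc, mul_mul_mul_comm, ← sq, ← sq, Real.sq_sqrt ha.le,
      Real.sq_sqrt (by linarith [hs.1, hs.2])]

lemma hasDerivAt (ha : 0 ≤ a) (hs : s ∈ Ioo a b) :
    HasDerivAt (sqrtMulDivAntideriv a b) (√((b - s) * (s - a)) / s) s := by
  have hs0 : 0 < s := ha.trans_lt hs.1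
  have hQ : 0 < (b - s) * (s - a) := mul_pos (sub_pos.2 hs.2) (sub_pos.2 hs.1)
  have hS := Real.sqrt_pos.2 hQ
  refine (((hasDerivAt_sqrt hs).add ((hasDerivAt_arcsin_affine hs).const_mul ((a + b) / 2))).sub
    (hasDerivAt_moebius_term ha hs)).congr_deriv ?_
  field_simp
  rw [Real.sq_sqrt hQ.le]
  ring

lemma continuousOn (ha : 0 ≤ a) (hab : a < b) :
    ContinuousOn (sqrtMulDivAntideriv a b) (Icc a b) := by
  unfold sqrtMulDivAntideriv
  rcases ha.eq_or_lt with rfl | ha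
  · simp only [Real.sqrt_zero, zero_mul, sub_zero]
    fun_prop
  · have hne : ∀ s ∈ Icc a b, (b - a) * s ≠ 0 := fun s hs =>
      mul_ne_zero (by linarith) (ha.trans_le hs.1).ne'
    fun_prop (disch := assumption)

lemma apply_right (ha : 0 ≤ a) (hab : a < b) :
    sqrtMulDivAntideriv a b b = π / 2 * ((a + b) / 2 - √a * √b) := by
  have hu : (2 * b - a - b) / (b - a) = 1 := by
    rw [div_eq_one_iff_eq (by linarith)]; ring
  have hv : ((a + b) * b - 2 * a * b) / ((b - a) * b) = 1 := by
    rw [div_eq_one_iff_eq (mul_ne_zero (by linarith) (by linarith))]; ring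
  rw [sqrtMulDivAntideriv, hu, hv, sub_self, zero_mul, Real.sqrt_zero, arcsin_one]
  ring

lemma apply_left (ha : 0 ≤ a) (hab : a < b) :
    sqrtMulDivAntideriv a b a = -(π / 2 * ((a + b) / 2 - √a * √b)) := by
  have hu : (2 * a - a - b) / (b - a) = -1 := by
    rw [div_eq_iff (by linarith)]; ring
  rw [sqrtMulDivAntideriv, hu, sub_self, mul_zero, Real.sqrt_zero, arcsin_neg_one]
  rcases ha.eq_or_lt with rfl | ha
  · simp only [Real.sqrt_zero]; ring
  · have hv : ((a + b) * a - 2 * a * b) / ((b - a) * a) = -1 := by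
      rw [div_eq_iff (mul_ne_zero (by linarith) ha.ne')]; ring
    rw [hv, arcsin_neg_one]
    ring

end sqrtMulDivAntideriv

lemma integrableOn_sqrt_mul_div (ha : 0 ≤ a) (hab : a < b) :
    IntegrableOn (fun s => √((b - s) * (s - a)) / s) (Ioc a b) :=
  intervalIntegral.integrableOn_deriv_of_nonneg (sqrtMulDivAntideriv.continuousOn ha hab)
    (fun _ hs => sqrtMulDivAntideriv.hasDerivAt ha hs)
    (fun _ hs => div_nonneg (Real.sqrt_nonneg _) (ha.trans hs.1.le))

theorem integral_sqrt_mul_div (ha : 0 ≤ a) (hab : a < b) :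
    ∫ s in a..b, √((b - s) * (s - a)) / s = π / 2 * (√b - √a) ^ 2 := by
  rw [intervalIntegral.integral_eq_sub_of_hasDerivAt_of_le hab.le
    (sqrtMulDivAntideriv.continuousOn ha hab) (fun _ hs => sqrtMulDivAntideriv.hasDerivAt ha hs)
    ((intervalIntegrable_iff_integrableOn_Ioc_of_le hab.le).2 (integrableOn_sqrt_mul_div ha hab)),
    sqrtMulDivAntideriv.apply_right ha hab, sqrtMulDivAntideriv.apply_left ha hab, sub_sq,
    Real.sq_sqrt ha, Real.sq_sqrt (by linarith)]
  ring

end SqrtMulDiv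

noncomputable def mpDensity (γ : ℝ) : ℝ → ENNReal :=
  (Icc ((1 - √γ) ^ 2) ((1 + √γ) ^ 2)).indicator fun s =>
    ENNReal.ofReal (√(((1 + √γ) ^ 2 - s) * (s - (1 - √γ) ^ 2)) / (2 * π * γ * s))

namespace MP

variable {γ : ℝ}

lemma eq_dirac_add_withDensity (γ : ℝ) :
    MP γ = ENNReal.ofReal (max 0 (1 - 1 / γ)) • Measure.dirac 0 +
      volume.withDensity (mpDensity γ) :=
  rfl

lemma one_sub_max_eq (hγ : 0 < γ) :
    1 - max 0 (1 - 1 / γ) = (2 * π * γ)⁻¹ * (π / 2 * (1 + √γ - |1 - √γ|) ^ 2) := by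
  have hγ' := Real.sq_sqrt hγ.le
  have := Real.sqrt_pos.2 hγ
  have := pi_pos
  rcases le_or_gt γ 1 with h | h
  · have hs : √γ ≤ 1 := Real.sqrt_le_one.2 h
    rw [abs_of_nonneg (by linarith), max_eq_left (by rw [sub_nonpos, le_div_iff₀ hγ]; linarith)]
    field_simp
    nlinarith
  · have hs : 1 < √γ := Real.lt_sqrt (by norm_num) |>.2 (by simpa using h)
    rw [abs_of_neg (by linarith), max_eq_right (by rw [sub_nonneg, div_le_one hγ]; linarith)]
    field_simp
    ring

lemma lintegral_mpDensity (hγ : 0 < γ) :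
    ∫⁻ s, mpDensity γ s = ENNReal.ofReal (1 - max 0 (1 - 1 / γ)) := by
  have ha : 0 ≤ (1 - √γ) ^ 2 := sq_nonneg _
  have hab : (1 - √γ) ^ 2 < (1 + √γ) ^ 2 := by nlinarith [Real.sqrt_pos.2 hγ]
  have hρ : ∀ s, √(((1 + √γ) ^ 2 - s) * (s - (1 - √γ) ^ 2)) / (2 * π * γ * s) =
      (2 * π * γ)⁻¹ * (√(((1 + √γ) ^ 2 - s) * (s - (1 - √γ) ^ 2)) / s) := by
    intro s
    rw [mul_comm _ s, ← div_div, div_eq_inv_mul]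
  have hint := ((integrableOn_sqrt_mul_div ha hab).congr_set_ae Ioc_ae_eq_Icc.symm).const_mul
    (2 * π * γ)⁻¹
  have hnn : 0 ≤ᵐ[volume.restrict (Icc ((1 - √γ) ^ 2) ((1 + √γ) ^ 2))]
      fun s => (2 * π * γ)⁻¹ * (√(((1 + √γ) ^ 2 - s) * (s - (1 - √γ) ^ 2)) / s) := by
    filter_upwards [ae_restrict_mem measurableSet_Icc] with s hs
    have := ha.trans hs.1
    positivity
  simp_rw [mpDensity, lintegral_indicator measurableSet_Icc, hρ]
  rw [← ofReal_integral_eq_lintegral_ofReal hint hnn, integral_const_mul,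
    integral_Icc_eq_integral_Ioc, ← intervalIntegral.integral_of_le hab.le,
    integral_sqrt_mul_div ha hab, Real.sqrt_sq (by positivity : 0 ≤ 1 + √γ), Real.sqrt_sq_eq_abs,
    one_sub_max_eq hγ]

lemma mpDensity_eq_zero_of_neg {s : ℝ} (hs : s < 0) : mpDensity γ s = 0 :=
  indicator_of_notMem (fun h => ((sq_nonneg _).trans h.1).not_gt hs) _

lemma withDensity_mpDensity_Iic : volume.withDensity (mpDensity γ) (Iic 0) = 0 := by
  rw [withDensity_apply _ measurableSet_Iic, ← Measure.restrict_congr_set Iio_ae_eq_Iic,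
    setLIntegral_congr_fun measurableSet_Iio (fun _ hs => mpDensity_eq_zero_of_neg hs),
    lintegral_zero]

lemma withDensity_mpDensity_univ (hγ : 0 < γ) :
    volume.withDensity (mpDensity γ) univ = ENNReal.ofReal (1 - max 0 (1 - 1 / γ)) := by
  rw [withDensity_apply _ MeasurableSet.univ, Measure.restrict_univ, lintegral_mpDensity hγ]

lemma max_zero_one_sub_one_div_lt_one (hγ : 0 < γ) : max 0 (1 - 1 / γ) < 1 :=
  max_lt zero_lt_one (sub_lt_self _ (by positivity))

lemma isProbabilityMeasure (hγ : 0 < γ) : IsProbabilityMeasure (MP γ) := by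
  constructor
  rw [eq_dirac_add_withDensity, Measure.add_apply, Measure.smul_apply, measure_univ, smul_eq_mul,
    mul_one, withDensity_mpDensity_univ hγ, ← ENNReal.ofReal_add (le_max_left _ _)
    (sub_nonneg.2 (max_zero_one_sub_one_div_lt_one hγ).le), add_sub_cancel, ENNReal.ofReal_one]

lemma ae_nonneg : ∀ᵐ s ∂(MP γ), 0 ≤ s := by
  rw [ae_iff, show {s : ℝ | ¬0 ≤ s} = Iio 0 by ext; simp, eq_dirac_add_withDensity,
    Measure.add_apply, Measure.smul_apply, Measure.dirac_apply, indicator_of_notMem self_notMem_Iio,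
    measure_mono_null Iio_subset_Iic_self withDensity_mpDensity_Iic]
  simp

lemma real_singleton_zero : (MP γ).real {0} = max 0 (1 - 1 / γ) := by
  rw [Measure.real, eq_dirac_add_withDensity, Measure.add_apply, Measure.smul_apply,
    Measure.dirac_apply_of_mem (mem_singleton 0),
    withDensity_absolutelyContinuous volume _ Real.volume_singleton, add_zero, smul_eq_mul,
    mul_one, ENNReal.toReal_ofReal (le_max_left _ _)]

lemma Ioi_zero_ne_zero (hγ : 0 < γ) : MP γ (Ioi 0) ≠ 0 := by
  have hIoi :
      volume.withDensity (mpDensity γ) (Ioi 0) = ENNReal.ofReal (1 - max 0 (1 - 1 / γ)) := by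
    rw [← compl_Iic,
      measure_compl measurableSet_Iic (withDensity_mpDensity_Iic ▸ ENNReal.zero_ne_top),
      withDensity_mpDensity_Iic, tsub_zero, withDensity_mpDensity_univ hγ]
  rw [eq_dirac_add_withDensity, Measure.add_apply, hIoi, Ne, add_eq_zero, not_and_or,
    ENNReal.ofReal_eq_zero, not_le, sub_pos]
  exact Or.inr (max_zero_one_sub_one_div_lt_one hγ)

end MP

theorem stmt19 (γ : ℝ) (hγ : 0 < γ)
    (F : ℝ → ℝ)
    (hF : ∀ lam, F lam = lam ^ 2 * ∫ s, 1 / (s + lam) ^ 2 ∂(MP γ)) :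
    StrictMonoOn F (Set.Ioi 0) ∧
    ContinuousOn F (Set.Ioi 0) ∧
    Tendsto F (nhdsWithin 0 (Set.Ioi 0)) (nhds (max 0 (1 - 1 / γ))) ∧
    Tendsto F atTop (nhds 1) ∧
    ∀ τ : ℝ, max 0 (1 - 1 / γ) < τ → τ < 1 → ∃! lam, 0 < lam ∧ F lam = τ := by
  have hF' : F = scaledStieltjesDeriv (MP γ) :=
    funext fun lam => (hF lam).trans (scaledStieltjesDeriv_eq _ lam).symm
  subst hF'
  have := MP.isProbabilityMeasure hγ
  have hmono := scaledStieltjesDeriv.strictMonoOn MP.ae_nonneg (MP.Ioi_zero_ne_zero hγ)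
  have hcont := scaledStieltjesDeriv.continuousOn (μ := MP γ) MP.ae_nonneg
  have h0 := MP.real_singleton_zero (γ := γ) ▸
    scaledStieltjesDeriv.tendsto_nhdsGT_zero MP.ae_nonneg
  have htop : Tendsto (scaledStieltjesDeriv (MP γ)) atTop (nhds 1) := by
    simpa using scaledStieltjesDeriv.tendsto_atTop (μ := MP γ) MP.ae_nonneg
  exact ⟨hmono, hcont, h0, htop,
    fun _ hτ₀ hτ₁ => hmono.existsUnique_eq_of_tendsto hcont h0 htop hτ₀ hτ₁⟩
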